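/- arXiv:2106.00068 — 3 statements merged into one kernel-verified Lean document; each statement's English description precedes it below -/
import Mathlib

section
/- Let n ≥ 2 be an integer, M > 0, and let α : [0,∞) → ℝ be continuous with 0 < α(t) ≤ M for all t. Let H₀ < M(1-n)/n (in particular H₀ < 0) and set t* = -(1/M)·log(1 - M(1-n)/(n·H₀)) > 0. If H : [0,t*) → ℝ is differentiable with H(0) = H₀ and satisfies the Riccati differential inequality H'(t) + α(t)·H(t) + (n/(n-1))·H(t)² ≤ 0 for all t ∈ [0,t*), then H(t) → -∞ as t → t*⁻. -/
set_option maxHeartbeats 1000000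


open Real Set Filter

/-- ODE core of the finite-time blowup theorem with bounded damping: a solution of the
Riccati differential inequality `H' + α H + (n/(n-1)) H² ≤ 0` with sufficiently negative
initial value blows up to `-∞` as `t → t*⁻`. -/
theorem riccati_blowup_bounded_damping
    (n : ℕ) (hn : 2 ≤ n) (M : ℝ) (hM : 0 < M)
    (α : ℝ → ℝ) (hαcont : Continuous α)
    (hαpos : ∀ t ≥ (0 : ℝ), 0 < α t) (hαM : ∀ t ≥ (0 : ℝ), α t ≤ M)
    (H₀ : ℝ) (hH₀ : H₀ < M * ((1 - (n : ℝ)) / n))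
    (tstar : ℝ)
    (htstar : tstar = -(1 / M) * Real.log (1 - M * (1 - (n : ℝ)) / ((n : ℝ) * H₀)))
    (H H' : ℝ → ℝ) (hH0 : H 0 = H₀)
    (hdiff : ∀ t ∈ Ico (0 : ℝ) tstar, HasDerivWithinAt H (H' t) (Ico 0 tstar) t)
    (hineq : ∀ t ∈ Ico (0 : ℝ) tstar,
      H' t + α t * H t + ((n : ℝ) / ((n : ℝ) - 1)) * (H t) ^ 2 ≤ 0) :
    Tendsto H (nhdsWithin tstar (Iio tstar)) atBot := by
  have hn2 : (2 : ℝ) ≤ (n : ℝ) := by exact_mod_cast hn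
  have hn1 : (0 : ℝ) < (n : ℝ) - 1 := by linarith
  have hnpos : (0 : ℝ) < (n : ℝ) := by linarith
  obtain ⟨c, hc_def⟩ : ∃ c : ℝ, c = (n : ℝ) / ((n : ℝ) - 1) := ⟨_, rfl⟩
  rw [← hc_def] at hineq
  have hc : 0 < c := hc_def ▸ div_pos hnpos hn1
  have hMne : M ≠ 0 := ne_of_gt hM
  have hcne : c ≠ 0 := ne_of_gt hc
  -- initial value is negative and below -M/c
  have hH₀' : H₀ < -(M / c) := by
    have h : M * ((1 - (n : ℝ)) / n) = -(M / c) := by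
      rw [hc_def]; field_simp; ring
    linarith [h ▸ hH₀]
  have hH₀neg : H₀ < 0 := by
    have : (0:ℝ) < M / c := by positivity
    linarith
  have hH₀ne : H₀ ≠ 0 := ne_of_lt hH₀neg
  obtain ⟨A, hA_def⟩ : ∃ A : ℝ, A = H₀⁻¹ + c / M := ⟨_, rfl⟩
  have hcH₀ : c * H₀ < -M := by
    have h1 : c * H₀ < c * (-(M / c)) := (mul_lt_mul_iff_right₀ hc).2 hH₀'
    have h2 : c * (-(M / c)) = -M := by field_simp
    linarith
  have hA : 0 < A := by
    have h1 : H₀⁻¹ + c / M = (M + c * H₀) / (H₀ * M) := by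
      field_simp
    rw [hA_def, h1]
    exact div_pos_of_neg_of_neg (by linarith) (mul_neg_of_neg_of_pos hH₀neg hM)
  have hAne : A ≠ 0 := ne_of_gt hA
  have hAc : A < c / M := by
    have : H₀⁻¹ < 0 := inv_neg''.2 hH₀neg
    rw [hA_def]; linarith
  -- the logarithm's argument
  obtain ⟨L, hL_def⟩ : ∃ L : ℝ, L = 1 - M * (1 - (n : ℝ)) / ((n : ℝ) * H₀) := ⟨_, rfl⟩
  rw [← hL_def] at htstar
  have hLA : L = A * M / c := by
    rw [hL_def, hA_def, hc_def]
    field_simp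
    ring
  have hL0 : 0 < L := by rw [hLA]; positivity
  have hL1 : L < 1 := by
    rw [hLA, div_lt_one hc]
    calc A * M < (c / M) * M := (mul_lt_mul_iff_left₀ hM).2 hAc
      _ = c := by field_simp
  have hlogL : Real.log L < 0 := Real.log_neg hL0 hL1
  have htpos : 0 < tstar := by
    rw [htstar]
    have h : -(1 / M) * Real.log L = (1 / M) * (-Real.log L) := by ring
    rw [h]
    exact mul_pos (by positivity) (by linarith)
  have hexp : Real.exp (M * tstar) = c / (M * A) := by
    have h1 : M * tstar = -Real.log L := by
      rw [htstar]; field_simp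
    rw [h1, Real.exp_neg, Real.exp_log hL0, hLA, inv_div, mul_comm A M]
  -- continuity of H on the interval
  have hHcont : ContinuousOn H (Ico 0 tstar) := fun s hs =>
    (hdiff s hs).continuousWithinAt
  -- derivatives with respect to the right neighborhood
  have hdiffIci : ∀ x ∈ Ico (0:ℝ) tstar, HasDerivWithinAt H (H' x) (Ici x) x := by
    intro x hx
    apply (hdiff x hx).mono_of_mem_nhdsWithin
    have h1 : Ico x tstar ∈ nhdsWithin x (Ici x) :=
      Ico_mem_nhdsGE hx.2
    exact mem_of_superset h1 (Ico_subset_Ico hx.1 le_rfl)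
  -- Step 1: H stays negative
  have hneg : ∀ t ∈ Ico (0:ℝ) tstar, H t < 0 := by
    intro t ht
    have hsub : Icc (0:ℝ) t ⊆ Ico 0 tstar := fun s hs => ⟨hs.1, lt_of_le_of_lt hs.2 ht.2⟩
    have hsub' : Ico (0:ℝ) t ⊆ Ico 0 tstar := fun s hs => ⟨hs.1, lt_trans hs.2 ht.2⟩
    have h_f : ContinuousOn (fun s => Real.exp (M * s) * H s) (Icc 0 t) :=
      (Real.continuous_exp.comp (continuous_const.mul continuous_id)).continuousOn.mul
        (hHcont.mono hsub)
    have h_f' : ∀ x ∈ Ico (0:ℝ) t, HasDerivWithinAt (fun s => Real.exp (M * s) * H s)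
        (Real.exp (M * x) * (M * 1) * H x + Real.exp (M * x) * H' x) (Ici x) x := fun x hx =>
      ((((hasDerivAt_id x).const_mul M).exp).hasDerivWithinAt).mul (hdiffIci x (hsub' hx))
    have h_a : Real.exp (M * 0) * H 0 ≤ H₀ := by simp [hH0]
    have h_bound : ∀ x ∈ Ico (0:ℝ) t, Real.exp (M * x) * H x = H₀ →
        Real.exp (M * x) * (M * 1) * H x + Real.exp (M * x) * H' x < 0 := by
      intro x hx hfx
      have hx' : x ∈ Ico (0:ℝ) tstar := hsub' hx
      have he : 0 < Real.exp (M * x) := Real.exp_pos _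
      have hHx : H x < 0 := by nlinarith [hfx, he]
      have hi := hineq x hx'
      have hα := hαM x hx'.1
      have hmn : M * H x ≤ α x * H x := mul_le_mul_of_nonpos_right hα hHx.le
      have hsq : 0 < c * H x ^ 2 := mul_pos hc (by nlinarith)
      have h5 : M * H x + H' x ≤ -(c * H x ^ 2) := by linarith
      have h6 : Real.exp (M * x) * (M * H x + H' x) ≤
          Real.exp (M * x) * (-(c * H x ^ 2)) := mul_le_mul_of_nonneg_left h5 he.le
      have h7 : Real.exp (M * x) * (-(c * H x ^ 2)) < 0 := by
        rw [mul_neg]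
        exact neg_lt_zero.2 (mul_pos he hsq)
      calc Real.exp (M * x) * (M * 1) * H x + Real.exp (M * x) * H' x
          = Real.exp (M * x) * (M * H x + H' x) := by ring
        _ ≤ Real.exp (M * x) * (-(c * H x ^ 2)) := h6
        _ < 0 := h7
    have key := image_le_of_deriv_right_lt_deriv_boundary' h_f h_f' h_a
      (continuousOn_const (c := H₀)) (fun x _ => hasDerivWithinAt_const x _ H₀)
      (fun x hx hfx => h_bound x hx hfx)
    have h1 := key (right_mem_Icc.2 ht.1)
    have he : 0 < Real.exp (M * t) := Real.exp_pos _
    nlinarith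
  -- Step 2: lower bound for the reciprocal
  have hlow : ∀ t ∈ Ico (0:ℝ) tstar,
      A ≤ Real.exp (-M * t) * ((H t)⁻¹ + c / M) := by
    intro t ht
    have hsub : Icc (0:ℝ) t ⊆ Ico 0 tstar := fun s hs => ⟨hs.1, lt_of_le_of_lt hs.2 ht.2⟩
    have hsub' : Ico (0:ℝ) t ⊆ Ico 0 tstar := fun s hs => ⟨hs.1, lt_trans hs.2 ht.2⟩
    have h_a : (fun _ : ℝ => A) 0 ≤ Real.exp (-M * 0) * ((H 0)⁻¹ + c / M) := by
      simp only [hH0, mul_zero, neg_zero, Real.exp_zero, one_mul, hA_def]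
      norm_num
    have h_B : ContinuousOn (fun s => Real.exp (-M * s) * ((H s)⁻¹ + c / M)) (Icc 0 t) := by
      apply ContinuousOn.mul
      · exact (Real.continuous_exp.comp (continuous_const.mul continuous_id)).continuousOn
      · exact ((hHcont.mono hsub).inv₀ fun s hs => (hneg s (hsub hs)).ne).add
          continuousOn_const
    have h_B' : ∀ x ∈ Ico (0:ℝ) t,
        HasDerivWithinAt (fun s => Real.exp (-M * s) * ((H s)⁻¹ + c / M))
          (Real.exp (-M * x) * (-M * 1) * ((H x)⁻¹ + c / M) +
            Real.exp (-M * x) * (-(H' x) / H x ^ 2)) (Ici x) x := by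
      intro x hx
      have hne := (hneg x (hsub' hx)).ne
      exact ((((hasDerivAt_id x).const_mul (-M)).exp).hasDerivWithinAt).mul
        (((hdiffIci x (hsub' hx)).inv hne).add_const (c / M))
    have h_bound : ∀ x ∈ Ico (0:ℝ) t, (0:ℝ) ≤
        Real.exp (-M * x) * (-M * 1) * ((H x)⁻¹ + c / M) +
          Real.exp (-M * x) * (-(H' x) / H x ^ 2) := by
      intro x hx
      have hx' : x ∈ Ico (0:ℝ) tstar := hsub' hx
      have hHx : H x < 0 := hneg x hx'
      have hne : H x ≠ 0 := hHx.ne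
      have hi := hineq x hx'
      have hα := hαM x hx'.1
      have he : 0 < Real.exp (-M * x) := Real.exp_pos _
      have hkey : H' x ≤ -(M * H x) - c * H x ^ 2 := by
        nlinarith [mul_nonneg (show (0:ℝ) ≤ M - α x by linarith)
          (show (0:ℝ) ≤ -H x by linarith)]
      have hQ : 0 ≤ (-M * 1) * ((H x)⁻¹ + c / M) + (-(H' x) / H x ^ 2) := by
        have hsq : 0 < H x ^ 2 := by nlinarith
        rw [← mul_nonneg_iff_of_pos_right hsq]
        have heq : ((-M * 1) * ((H x)⁻¹ + c / M) + (-(H' x) / H x ^ 2)) * H x ^ 2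
            = -(M * H x) - c * H x ^ 2 - H' x := by
          field_simp
          ring
        rw [heq]
        linarith
      calc (0:ℝ) = Real.exp (-M * x) * 0 := by ring
        _ ≤ Real.exp (-M * x) *
            ((-M * 1) * ((H x)⁻¹ + c / M) + (-(H' x) / H x ^ 2)) :=
          mul_le_mul_of_nonneg_left hQ he.le
        _ = Real.exp (-M * x) * (-M * 1) * ((H x)⁻¹ + c / M) +
            Real.exp (-M * x) * (-(H' x) / H x ^ 2) := by ring
    have key := image_le_of_deriv_right_le_deriv_boundary
      (f := fun _ : ℝ => A) (f' := fun _ : ℝ => (0:ℝ)) (a := 0) (b := t)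
      (B := fun s => Real.exp (-M * s) * ((H s)⁻¹ + c / M))
      (B' := fun x => Real.exp (-M * x) * (-M * 1) * ((H x)⁻¹ + c / M) +
        Real.exp (-M * x) * (-(H' x) / H x ^ 2))
      continuousOn_const (fun x _ => hasDerivWithinAt_const x _ A)
      h_a h_B h_B' h_bound
    exact key (right_mem_Icc.2 ht.1)
  -- Step 3: pointwise upper bound for H
  have hHle : ∀ t ∈ Ico (0:ℝ) tstar, H t ≤ (A * Real.exp (M * t) - c / M)⁻¹ := by
    intro t ht
    have hHt : H t < 0 := hneg t ht
    have hy : (H t)⁻¹ < 0 := inv_neg''.2 hHt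
    have he : 0 < Real.exp (M * t) := Real.exp_pos _
    have hee : Real.exp (-M * t) * Real.exp (M * t) = 1 := by
      rw [← Real.exp_add]; ring_nf; exact Real.exp_zero
    have h1 := hlow t ht
    have hY : A * Real.exp (M * t) - c / M ≤ (H t)⁻¹ := by
      have h2 : A * Real.exp (M * t) ≤
          Real.exp (-M * t) * ((H t)⁻¹ + c / M) * Real.exp (M * t) :=
        mul_le_mul_of_nonneg_right h1 he.le
      have h3 : Real.exp (-M * t) * ((H t)⁻¹ + c / M) * Real.exp (M * t)
          = (H t)⁻¹ + c / M := by
        rw [mul_comm, ← mul_assoc, mul_comm (Real.exp (M*t)), hee, one_mul]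
      rw [h3] at h2
      linarith
    have hYneg : A * Real.exp (M * t) - c / M < 0 := lt_of_le_of_lt hY hy
    have h4 := (inv_le_inv_of_neg hy hYneg).2 hY
    rwa [inv_inv] at h4
  -- Step 4: the comparison function tends to -∞
  have hφ0 : A * Real.exp (M * tstar) - c / M = 0 := by
    rw [hexp]
    field_simp
    ring
  have hφneg : ∀ t < tstar, A * Real.exp (M * t) - c / M < 0 := by
    intro t ht
    have h1 : Real.exp (M * t) < Real.exp (M * tstar) :=
      Real.exp_lt_exp.2 (by nlinarith)
    nlinarith [hA]
  have hφtend : Tendsto (fun t => A * Real.exp (M * t) - c / M)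
      (nhdsWithin tstar (Iio tstar)) (nhds 0) := by
    have hcont : Continuous fun t : ℝ => A * Real.exp (M * t) - c / M := by continuity
    have h := (hcont.tendsto tstar).mono_left
      (nhdsWithin_le_nhds (s := Iio tstar))
    rwa [hφ0] at h
  have hnegtend : Tendsto (fun t => -(A * Real.exp (M * t) - c / M))
      (nhdsWithin tstar (Iio tstar)) (nhdsWithin 0 (Ioi 0)) := by
    apply tendsto_nhdsWithin_of_tendsto_nhds_of_eventually_within
    · simpa using hφtend.neg
    · filter_upwards [self_mem_nhdsWithin] with t ht
      exact neg_pos.2 (hφneg t ht)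
  have hinvtend : Tendsto (fun t => (A * Real.exp (M * t) - c / M)⁻¹)
      (nhdsWithin tstar (Iio tstar)) atBot := by
    have h1 : Tendsto (fun t => (-(A * Real.exp (M * t) - c / M))⁻¹)
        (nhdsWithin tstar (Iio tstar)) atTop :=
      tendsto_inv_nhdsGT_zero.comp hnegtend
    have h2 : Tendsto (fun t => -(-(A * Real.exp (M * t) - c / M))⁻¹)
        (nhdsWithin tstar (Iio tstar)) atBot :=
      tendsto_neg_atTop_atBot.comp h1
    have h3 : (fun t => -(-(A * Real.exp (M * t) - c / M))⁻¹)
        = fun t => (A * Real.exp (M * t) - c / M)⁻¹ := by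
      funext s; rw [inv_neg, neg_neg]
    rwa [h3] at h2
  -- conclusion
  apply tendsto_atBot_mono' _ _ hinvtend
  have hIoo : Ioo 0 tstar ∈ nhdsWithin tstar (Iio tstar) :=
    Ioo_mem_nhdsLT_of_mem ⟨htpos, le_rfl⟩
  filter_upwards [hIoo] with t ht
  exact hHle t ⟨ht.1.le, ht.2⟩
end

section
/- Let n ≥ 2 be an integer, c > 0, and α(t) = e^{ct}. Let E₁(x) = ∫ₓ^∞ e^{-t}/t dt be the exponential integral. Suppose H₀ < -c(n-1)/(n·e^{1/c}·E₁(1/c)). Then there exists a finite time t* > 0 such that every differentiable function H : [0,t*) → ℝ with H(0) = H₀ satisfying H'(t) + α(t)·H(t) + (n/(n-1))·H(t)² ≤ 0 for all t ∈ [0,t*) obeys H(t) → -∞ as t → t*⁻. -/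
open Real Set Filter Topology

/-- The exponential integral `E₁(x) = ∫ₓ^∞ e^{-t}/t dt`. -/
noncomputable def expIntegralE1 (x : ℝ) : ℝ := ∫ t in Set.Ioi x, Real.exp (-t) / t

namespace RiccatiAux

open MeasureTheory

noncomputable def A (c t : ℝ) : ℝ := (Real.exp (c*t) - 1)/c
noncomputable def phi (c t : ℝ) : ℝ := Real.exp (-(A c t))
noncomputable def Phi (c t : ℝ) : ℝ := ∫ s in (0:ℝ)..t, phi c s

variable {c : ℝ}

lemma phi_pos (t : ℝ) : 0 < phi c t := Real.exp_pos _

lemma continuous_phi : Continuous (phi c) := by unfold phi A; continuity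

lemma hasDerivAt_A (hc : c ≠ 0) (t : ℝ) : HasDerivAt (A c) (Real.exp (c*t)) t := by
  have h : HasDerivAt (fun t => c * t) c t := by simpa using (hasDerivAt_id t).const_mul c
  have h2 := (Real.hasDerivAt_exp (c*t)).comp t h
  have h3 := (h2.sub_const 1).div_const c
  refine h3.congr_deriv ?_
  field_simp

lemma hasDerivAt_phi (hc : c ≠ 0) (t : ℝ) :
    HasDerivAt (phi c) (-(Real.exp (c*t)) * phi c t) t := by
  have h := ((hasDerivAt_A hc t).neg).exp
  show HasDerivAt (fun x => Real.exp (-(A c x))) _ t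
  simpa [phi, mul_comm] using h

lemma hasDerivAt_Phi (t : ℝ) : HasDerivAt (Phi c) (phi c t) t := by
  apply intervalIntegral.integral_hasDerivAt_right
  · exact continuous_phi.intervalIntegrable _ _
  · exact continuous_phi.stronglyMeasurableAtFilter _ _
  · exact continuous_phi.continuousAt

lemma continuous_Phi : Continuous (Phi c) :=
  continuous_iff_continuousAt.2 fun t => (hasDerivAt_Phi t).continuousAt

lemma Phi_nonneg {t : ℝ} (ht : 0 ≤ t) : 0 ≤ Phi c t :=
  intervalIntegral.integral_nonneg ht (fun s _ => (phi_pos s).le)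

lemma A_zero : A c 0 = 0 := by simp [A]
lemma phi_zero : phi c 0 = 1 := by simp [phi, A_zero]
lemma Phi_zero : Phi c 0 = 0 := by simp [Phi]

lemma integrableOn_phi (hc : 0 < c) : IntegrableOn (phi c) (Ioi 0) := by
  have hbound : ∀ s ∈ Ioi (0:ℝ), ‖phi c s‖ ≤ Real.exp (-s) := by
    intro s hs
    rw [Real.norm_eq_abs, abs_of_pos (phi_pos s)]
    apply Real.exp_le_exp.2
    rw [neg_le_neg_iff]
    show s ≤ (Real.exp (c*s) - 1)/c
    rw [le_div_iff₀ hc]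
    nlinarith [Real.add_one_le_exp (c*s)]
  have hint : IntegrableOn (fun s => Real.exp (-s)) (Ioi (0:ℝ)) := by
    simpa using exp_neg_integrableOn_Ioi 0 one_pos
  apply Integrable.mono hint (continuous_phi.aestronglyMeasurable.restrict)
  filter_upwards [ae_restrict_mem measurableSet_Ioi] with s hs
  have := hbound s hs
  rwa [Real.norm_eq_abs (Real.exp (-s)), abs_of_pos (Real.exp_pos (-s))]

lemma tendsto_Phi (hc : 0 < c) :
    Tendsto (Phi c) atTop (𝓝 (∫ s in Ioi (0:ℝ), phi c s)) :=
  intervalIntegral_tendsto_integral_Ioi 0 (integrableOn_phi hc) tendsto_id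

lemma integral_phi_pos (hc : 0 < c) : 0 < ∫ s in Ioi (0:ℝ), phi c s := by
  rw [setIntegral_pos_iff_support_of_nonneg_ae
    (by filter_upwards with s using (phi_pos s).le) (integrableOn_phi hc)]
  have hsupp : Function.support (phi c) = univ := by
    ext s; simp [(phi_pos (c := c) s).ne']
  rw [hsupp, univ_inter, Real.volume_Ioi]
  simp

lemma image_f (hc : 0 < c) :
    (fun x => Real.exp (c*x)/c) '' (Ioi 0) = Ioi (1/c) := by
  ext y
  constructor
  · rintro ⟨x, hx, rfl⟩
    have h1 : (1:ℝ) < Real.exp (c*x) := by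
      rw [show (1:ℝ) = Real.exp 0 by simp]
      exact Real.exp_lt_exp.2 (by nlinarith [mem_Ioi.1 hx])
    exact (div_lt_div_iff_of_pos_right hc).2 h1
  · intro hy
    have hy' : 1/c < y := hy
    have hcy : 1 < c * y := by
      rw [div_lt_iff₀ hc] at hy'; linarith [hy']
    have hcy0 : 0 < c * y := by linarith
    refine ⟨Real.log (c*y)/c, ?_, ?_⟩
    · exact div_pos (Real.log_pos hcy) hc
    · show Real.exp (c * (Real.log (c*y)/c)) / c = y
      rw [mul_div_cancel₀ _ hc.ne', Real.exp_log hcy0]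
      field_simp

lemma E1_eq (hc : 0 < c) :
    expIntegralE1 (1/c) = c * Real.exp (-(1/c)) * ∫ s in Ioi (0:ℝ), phi c s := by
  have hderiv : ∀ x ∈ Ioi (0:ℝ),
      HasDerivWithinAt (fun x => Real.exp (c*x)/c) (Real.exp (c*x)) (Ioi 0) x := by
    intro x hx
    have h : HasDerivAt (fun x => Real.exp (c*x)) (Real.exp (c*x) * c) x :=
      (Real.hasDerivAt_exp (c*x)).comp x (by simpa using (hasDerivAt_id x).const_mul c)
    have := (h.div_const c).hasDerivWithinAt (s := Ioi 0)
    simpa [mul_div_assoc, mul_div_cancel_right₀ _ hc.ne'] using this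
  have hinj : InjOn (fun x => Real.exp (c*x)/c) (Ioi 0) := by
    have : StrictMono (fun x => Real.exp (c*x)/c) := fun a b hab => by
      apply div_lt_div_of_pos_right ?_ hc
      · exact Real.exp_lt_exp.2 (by nlinarith)
    exact this.injective.injOn
  have key := integral_image_eq_integral_abs_deriv_smul measurableSet_Ioi hderiv hinj
    (fun t => Real.exp (-t) / t)
  rw [image_f hc] at key
  have h2 : expIntegralE1 (1/c) = ∫ x in Ioi (0:ℝ),
      |Real.exp (c*x)| • (Real.exp (-(Real.exp (c*x)/c)) / (Real.exp (c*x)/c)) := key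
  rw [h2, ← MeasureTheory.integral_const_mul]
  apply setIntegral_congr_fun measurableSet_Ioi
  intro x _
  have he : (0:ℝ) < Real.exp (c*x) := Real.exp_pos _
  have hA : Real.exp (-(Real.exp (c*x)/c)) = Real.exp (-(1/c)) * phi c x := by
    rw [phi, ← Real.exp_add]
    congr 1
    unfold A
    field_simp
    ring
  simp only [abs_of_pos he, smul_eq_mul, hA]
  field_simp

lemma tendsto_inv_atBot {γ : Type*} {l : Filter γ} {u : γ → ℝ}
    (h : Tendsto u l (nhdsWithin 0 (Iio 0))) : Tendsto (fun x => (u x)⁻¹) l atBot := by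
  have h1 : Tendsto (fun x => -u x) l (nhdsWithin 0 (Ioi 0)) := by
    rw [tendsto_nhdsWithin_iff] at h ⊢
    refine ⟨by simpa using h.1.neg, ?_⟩
    filter_upwards [h.2] with x hx
    simpa using hx
  have h2 := tendsto_inv_nhdsGT_zero.comp h1
  have h3 := tendsto_neg_atTop_atBot.comp h2
  convert h3 using 2 with x
  rw [Function.comp_apply, Function.comp_apply, inv_neg, neg_neg]

lemma bound (hc : 0 < c) {k : ℝ} (hk : 0 < k) {b : ℝ} (H H' : ℝ → ℝ)
    (hd : ∀ t ∈ Ico (0:ℝ) b, HasDerivWithinAt H (H' t) (Ico 0 b) t)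
    (hineq : ∀ t ∈ Ico (0:ℝ) b, H' t + Real.exp (c*t) * H t + k * (H t)^2 ≤ 0)
    (hneg : ∀ t ∈ Ico (0:ℝ) b, H t < 0) :
    ∀ t ∈ Ico (0:ℝ) b, 1/(H 0) + k * Phi c t ≤ phi c t / H t := by
  intro t ht
  have h0 : (0:ℝ) ∈ Ico (0:ℝ) b := ⟨le_refl 0, lt_of_le_of_lt ht.1 ht.2⟩
  set G : ℝ → ℝ := fun t => phi c t / H t - k * Phi c t with hG
  have hI : interior (Ico (0:ℝ) b) = Ioo 0 b := interior_Ico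
  have hmono : MonotoneOn G (Ico 0 b) := by
    apply monotoneOn_of_hasDerivWithinAt_nonneg (convex_Ico 0 b)
      (f' := fun t => (-(Real.exp (c*t)) * phi c t * H t - phi c t * H' t)/(H t)^2
        - k * phi c t)
    · apply ContinuousOn.sub
      · exact (continuous_phi.continuousOn.div
          (fun x hx => (hd x hx).continuousWithinAt) (fun x hx => (hneg x hx).ne))
      · exact (continuous_const.mul continuous_Phi).continuousOn
    · rw [hI]
      intro x hx
      have hx' : x ∈ Ico (0:ℝ) b := ⟨hx.1.le, hx.2⟩
      have hdiv := ((hasDerivAt_phi hc.ne' x).hasDerivWithinAt.div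
        ((hd x hx').mono Ioo_subset_Ico_self) ((hneg x hx').ne))
      exact hdiv.sub (((hasDerivAt_Phi (c := c) x).hasDerivWithinAt).const_mul k)
    · rw [hI]
      intro x hx
      have hx' : x ∈ Ico (0:ℝ) b := ⟨hx.1.le, hx.2⟩
      have h2 : 0 < (H x)^2 := by
        have := (hneg x hx').ne
        positivity
      have hkey : k * (H x)^2 ≤ -(Real.exp (c*x)) * H x - H' x := by
        have := hineq x hx'; linarith
      have hp := phi_pos (c := c) x
      rw [sub_nonneg, le_div_iff₀ h2]
      nlinarith
  have hle := hmono h0 ht ht.1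
  have hG0 : G 0 = 1/(H 0) := by
    simp [hG, phi_zero, Phi_zero, one_div]
  rw [hG0] at hle
  simp only [hG] at hle
  linarith

end RiccatiAux

/-- ODE core of the finite-time blowup theorem with unbounded damping `α(t) = e^{ct}`:
if `H₀ < -c(n-1)/(n e^{1/c} E₁(1/c))` then there is a finite time `t* > 0` such that every
solution of the Riccati differential inequality `H' + α H + (n/(n-1)) H² ≤ 0` on `[0,t*)`
with `H(0) = H₀` tends to `-∞` as `t → t*⁻`. -/
theorem riccati_blowup_unbounded_damping
    (n : ℕ) (hn : 2 ≤ n) (c : ℝ) (hc : 0 < c)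
    (α : ℝ → ℝ) (hα : ∀ t, α t = Real.exp (c * t))
    (H₀ : ℝ)
    (hH₀ : H₀ < -(c * ((n : ℝ) - 1)) / ((n : ℝ) * Real.exp (1 / c) * expIntegralE1 (1 / c))) :
    ∃ tstar : ℝ, 0 < tstar ∧
      ∀ H H' : ℝ → ℝ, H 0 = H₀ →
        (∀ t ∈ Ico (0 : ℝ) tstar, HasDerivWithinAt H (H' t) (Ico 0 tstar) t) →
        (∀ t ∈ Ico (0 : ℝ) tstar,
          H' t + α t * H t + ((n : ℝ) / ((n : ℝ) - 1)) * (H t) ^ 2 ≤ 0) →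
        Tendsto H (nhdsWithin tstar (Iio tstar)) atBot := by
  classical
  set k : ℝ := (n : ℝ) / ((n : ℝ) - 1) with hk_def
  have hn2 : (2:ℝ) ≤ (n:ℝ) := by exact_mod_cast hn
  have hn1 : (0:ℝ) < (n:ℝ) - 1 := by linarith
  have hnpos : (0:ℝ) < (n:ℝ) := by linarith
  have hk : 0 < k := div_pos hnpos hn1
  set L : ℝ := ∫ s in Ioi (0:ℝ), RiccatiAux.phi c s with hL_def
  have hLpos : 0 < L := RiccatiAux.integral_phi_pos hc
  have hE1 : expIntegralE1 (1/c) = c * Real.exp (-(1/c)) * L := RiccatiAux.E1_eq hc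
  have hEpos : 0 < expIntegralE1 (1/c) := by rw [hE1]; positivity
  have hden : 0 < (n:ℝ) * Real.exp (1/c) * expIntegralE1 (1/c) := by positivity
  have hH0neg : H₀ < 0 := by
    apply lt_of_lt_of_le hH₀
    apply div_nonpos_of_nonpos_of_nonneg _ hden.le
    nlinarith
  -- key inequality: y := -1/(k*H₀) satisfies 0 < y < L
  have hkH0 : k * H₀ < 0 := mul_neg_of_pos_of_neg hk hH0neg
  set y : ℝ := -1 / (k * H₀) with hy_def
  have hy_pos : 0 < y := by
    rw [hy_def]
    exact div_pos_of_neg_of_neg (by norm_num) hkH0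
  have hyL : y < L := by
    have h1 : H₀ * ((n:ℝ) * Real.exp (1/c) * expIntegralE1 (1/c)) < -(c * ((n:ℝ) - 1)) :=
      (lt_div_iff₀ hden).1 hH₀
    rw [hE1] at h1
    have hexp : Real.exp (1/c) * Real.exp (-(1/c)) = 1 := by
      rw [← Real.exp_add]; simp
    have heq : H₀ * ((n:ℝ) * Real.exp (1/c) * (c * Real.exp (-(1/c)) * L))
        = H₀ * ((n:ℝ) * c * L) * (Real.exp (1/c) * Real.exp (-(1/c))) := by ring
    rw [heq, hexp, mul_one] at h1
    have h3 : H₀ * ((n:ℝ) * L) < -((n:ℝ) - 1) := by nlinarith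
    have hkk : k * ((n:ℝ) - 1) = (n:ℝ) := by rw [hk_def]; field_simp
    rw [hy_def, div_lt_iff_of_neg hkH0]
    nlinarith [h3, hkk, hn1]
  -- choose tstar with Phi tstar = y
  obtain ⟨T, hTy, hT0⟩ : ∃ T, y < RiccatiAux.Phi c T ∧ 0 ≤ T := by
    have hev := (RiccatiAux.tendsto_Phi hc).eventually (eventually_gt_nhds hyL)
    obtain ⟨T, h1, h2⟩ := (hev.and (eventually_ge_atTop (0:ℝ))).exists
    exact ⟨T, h1, h2⟩
  obtain ⟨tstar, htmem, htPhi⟩ : ∃ t ∈ Icc (0:ℝ) T, RiccatiAux.Phi c t = y := by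
    have him := intermediate_value_Icc hT0 (RiccatiAux.continuous_Phi (c := c)).continuousOn
    have hy : y ∈ Icc (RiccatiAux.Phi c 0) (RiccatiAux.Phi c T) :=
      ⟨by rw [RiccatiAux.Phi_zero]; exact hy_pos.le, hTy.le⟩
    obtain ⟨t, ht, h⟩ := him hy
    exact ⟨t, ht, h⟩
  have htstar_pos : 0 < tstar := by
    rcases htmem.1.lt_or_eq with h | h
    · exact h
    · exfalso
      rw [← h, RiccatiAux.Phi_zero] at htPhi
      linarith
  refine ⟨tstar, htstar_pos, ?_⟩
  intro H H' hH0val hd hineq'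
  have hineq : ∀ t ∈ Ico (0:ℝ) tstar, H' t + Real.exp (c*t) * H t + k * (H t)^2 ≤ 0 := by
    intro t ht
    have := hineq' t ht
    rwa [hα t] at this
  have hHcont : ContinuousOn H (Ico 0 tstar) := fun x hx => (hd x hx).continuousWithinAt
  -- Step 1 : H stays negative on [0, tstar)
  have hneg : ∀ t ∈ Ico (0:ℝ) tstar, H t < 0 := by
    by_contra hcon
    push_neg at hcon
    obtain ⟨t₁, ht₁, ht₁0⟩ := hcon
    have hsub : Icc (0:ℝ) t₁ ⊆ Ico 0 tstar := fun x hx => ⟨hx.1, lt_of_le_of_lt hx.2 ht₁.2⟩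
    have hc1 : ContinuousOn H (Icc 0 t₁) := hHcont.mono hsub
    set Z := Icc (0:ℝ) t₁ ∩ H ⁻¹' {0} with hZ
    have hZclosed : IsClosed Z :=
      hc1.preimage_isClosed_of_isClosed isClosed_Icc isClosed_singleton
    have hZne : Z.Nonempty := by
      have h0mem : (0:ℝ) ∈ Icc (H 0) (H t₁) := ⟨by rw [hH0val]; exact hH0neg.le, ht₁0⟩
      obtain ⟨z, hz, hz0⟩ := intermediate_value_Icc ht₁.1 hc1 h0mem
      exact ⟨z, hz, hz0⟩
    have hbdd : BddBelow Z := ⟨0, fun z hz => hz.1.1⟩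
    set s₀ := sInf Z with hs0_def
    have hs₀Z : s₀ ∈ Z := hZclosed.csInf_mem hZne hbdd
    have hs₀0 : H s₀ = 0 := hs₀Z.2
    have hs₀pos : 0 < s₀ := by
      rcases hs₀Z.1.1.lt_or_eq with h | h
      · exact h
      · exfalso; rw [← h] at hs₀0; rw [hH0val] at hs₀0; linarith
    have hs₀lt : s₀ < tstar := lt_of_le_of_lt hs₀Z.1.2 ht₁.2
    have hneg' : ∀ t ∈ Ico (0:ℝ) s₀, H t < 0 := by
      intro t ht
      by_contra hge
      push_neg at hge
      have hc2 : ContinuousOn H (Icc 0 t) :=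
        hc1.mono (Icc_subset_Icc le_rfl (le_trans ht.2.le hs₀Z.1.2))
      have h0mem : (0:ℝ) ∈ Icc (H 0) (H t) := ⟨by rw [hH0val]; exact hH0neg.le, hge⟩
      obtain ⟨z, hz, hz0⟩ := intermediate_value_Icc ht.1 hc2 h0mem
      have hzZ : z ∈ Z := ⟨⟨hz.1, le_trans hz.2 (le_trans ht.2.le hs₀Z.1.2)⟩, hz0⟩
      have hle := csInf_le hbdd hzZ
      have : z < s₀ := lt_of_le_of_lt hz.2 ht.2
      rw [← hs0_def] at hle
      linarith
    have hsub2 : Ico (0:ℝ) s₀ ⊆ Ico 0 tstar := fun x hx => ⟨hx.1, lt_trans hx.2 hs₀lt⟩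
    have hbnd := RiccatiAux.bound hc hk H H'
      (fun t ht => (hd t (hsub2 ht)).mono hsub2)
      (fun t ht => hineq t (hsub2 ht)) hneg'
    set l := nhdsWithin s₀ (Iio s₀) with hl_def
    have hmem : Ioo (0:ℝ) s₀ ∈ l := Ioo_mem_nhdsLT_of_mem ⟨hs₀pos, le_refl s₀⟩
    have hl_le : l ≤ nhdsWithin s₀ (Ico 0 tstar) := by
      refine le_trans (nhdsWithin_le_of_mem hmem) (nhdsWithin_mono _ ?_)
      exact fun x hx => ⟨hx.1.le, lt_trans hx.2 hs₀lt⟩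
    have hHs : Tendsto H l (𝓝 0) := by
      have hcw := (hHcont s₀ ⟨hs₀pos.le, hs₀lt⟩).tendsto
      rw [hs₀0] at hcw
      exact hcw.mono_left hl_le
    have hHnegl : ∀ᶠ t in l, H t < 0 := by
      filter_upwards [hmem] with t ht
      exact hneg' t ⟨ht.1.le, ht.2⟩
    have hHl : Tendsto H l (nhdsWithin 0 (Iio 0)) :=
      tendsto_nhdsWithin_iff.2 ⟨hHs, hHnegl⟩
    have hinv := RiccatiAux.tendsto_inv_atBot hHl
    have hphil : Tendsto (fun t => RiccatiAux.phi c t) l (𝓝 (RiccatiAux.phi c s₀)) :=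
      ((RiccatiAux.continuous_phi).tendsto s₀).mono_left nhdsWithin_le_nhds
    have hquot : Tendsto (fun t => RiccatiAux.phi c t / H t) l atBot := by
      have hmul := hinv.atBot_mul_pos (RiccatiAux.phi_pos (c := c) s₀) hphil
      refine hmul.congr (fun t => ?_)
      rw [div_eq_mul_inv, mul_comm]
    have hlow : ∀ᶠ t in l, 1/(H 0) ≤ RiccatiAux.phi c t / H t := by
      filter_upwards [hmem] with t ht
      have hb := hbnd t ⟨ht.1.le, ht.2⟩
      have hPhin : 0 ≤ RiccatiAux.Phi c t := RiccatiAux.Phi_nonneg ht.1.le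
      nlinarith
    obtain ⟨t, h1, h2⟩ :=
      ((hquot.eventually (eventually_lt_atBot (1/(H 0)))).and hlow).exists
    linarith
  -- Step 2 : blowup
  have hbnd := RiccatiAux.bound hc hk H H' hd hineq hneg
  set l := nhdsWithin tstar (Iio tstar) with hl_def
  have hmem : Ioo (0:ℝ) tstar ∈ l := Ioo_mem_nhdsLT_of_mem ⟨htstar_pos, le_refl _⟩
  set u : ℝ → ℝ := fun t => RiccatiAux.phi c t / H t with hu_def
  have hPhil : Tendsto (RiccatiAux.Phi c) l (𝓝 y) := by
    rw [← htPhi, hl_def]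
    exact ((RiccatiAux.continuous_Phi (c := c)).tendsto tstar).mono_left nhdsWithin_le_nhds
  have hlow : Tendsto (fun t => 1/(H 0) + k * RiccatiAux.Phi c t) l (𝓝 0) := by
    have hlim : Tendsto (fun t => 1/(H 0) + k * RiccatiAux.Phi c t) l
        (𝓝 (1/(H 0) + k * y)) := tendsto_const_nhds.add (hPhil.const_mul k)
    have hky : k * y = -(1/H₀) := by
      rw [hy_def]
      field_simp
    convert hlim using 2
    rw [hH0val, hky]
    ring
  have hu0 : Tendsto u l (𝓝 0) := by
    apply tendsto_of_tendsto_of_tendsto_of_le_of_le' hlow tendsto_const_nhds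
    · filter_upwards [hmem] with t ht
      exact hbnd t ⟨ht.1.le, ht.2⟩
    · filter_upwards [hmem] with t ht
      exact (div_neg_of_pos_of_neg (RiccatiAux.phi_pos t) (hneg t ⟨ht.1.le, ht.2⟩)).le
  have huneg : ∀ᶠ t in l, u t < 0 := by
    filter_upwards [hmem] with t ht
    exact div_neg_of_pos_of_neg (RiccatiAux.phi_pos t) (hneg t ⟨ht.1.le, ht.2⟩)
  have hul : Tendsto u l (nhdsWithin 0 (Iio 0)) := tendsto_nhdsWithin_iff.2 ⟨hu0, huneg⟩
  have hinv := RiccatiAux.tendsto_inv_atBot hul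
  have hphil : Tendsto (fun t => RiccatiAux.phi c t) l (𝓝 (RiccatiAux.phi c tstar)) :=
    ((RiccatiAux.continuous_phi).tendsto tstar).mono_left nhdsWithin_le_nhds
  have hfinal := hinv.atBot_mul_pos (RiccatiAux.phi_pos (c := c) tstar) hphil
  apply hfinal.congr'
  filter_upwards [hmem] with t ht
  have hHt := hneg t ⟨ht.1.le, ht.2⟩
  have hpt := RiccatiAux.phi_pos (c := c) t
  show (u t)⁻¹ * RiccatiAux.phi c t = H t
  rw [hu_def]
  simp only
  rw [inv_div, div_mul_cancel₀ _ hpt.ne']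
end

section
/- Let n ≥ 2 be an integer, α : [0,T) → ℝ continuous, and let H : [0,T) → ℝ be differentiable with H(t) < 0 for all t ∈ [0,T), H(0) = H₀, and H'(t) + α(t)·H(t) + (n/(n-1))·H(t)² ≤ 0 on [0,T). Define g(t) = (n/(n-1))·∫₀ᵗ exp(-∫₀ˢ α(z) dz) ds. Then for all t ∈ [0,T): 1/H(t) ≥ n·(1 + H₀·g(t)) / ((n-1)·H₀·g'(t)). -/
open Real Set Filter

/-- Integrating-factor bound for negative solutions of the Riccati differential inequality
`H' + α H + (n/(n-1)) H² ≤ 0`: with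
`g(t) = (n/(n-1)) ∫₀ᵗ exp(-∫₀ˢ α(z) dz) ds`, one has
`1/H(t) ≥ n (1 + H₀ g(t)) / ((n-1) H₀ g'(t))`. -/
theorem riccati_integrating_factor_bound
    (n : ℕ) (hn : 2 ≤ n) (T : ℝ) (α : ℝ → ℝ) (hαcont : Continuous α)
    (H H' : ℝ → ℝ) (H₀ : ℝ) (hH0 : H 0 = H₀)
    (hHneg : ∀ t ∈ Ico (0 : ℝ) T, H t < 0)
    (hdiff : ∀ t ∈ Ico (0 : ℝ) T, HasDerivWithinAt H (H' t) (Ico 0 T) t)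
    (hineq : ∀ t ∈ Ico (0 : ℝ) T,
      H' t + α t * H t + ((n : ℝ) / ((n : ℝ) - 1)) * (H t) ^ 2 ≤ 0)
    (g : ℝ → ℝ)
    (hg : ∀ t, g t = ((n : ℝ) / ((n : ℝ) - 1)) *
      ∫ s in (0 : ℝ)..t, Real.exp (-∫ z in (0 : ℝ)..s, α z)) :
    ∀ t ∈ Ico (0 : ℝ) T,
      1 / H t ≥ (n : ℝ) * (1 + H₀ * g t) / (((n : ℝ) - 1) * H₀ * deriv g t) := by
  intro t ht
  obtain ⟨ht0, htT⟩ := ht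
  have hT : 0 < T := lt_of_le_of_lt ht0 htT
  have h0mem : (0 : ℝ) ∈ Ico (0 : ℝ) T := ⟨le_refl 0, hT⟩
  have htmem : t ∈ Ico (0 : ℝ) T := ⟨ht0, htT⟩
  have hn2 : (2 : ℝ) ≤ (n : ℝ) := by exact_mod_cast hn
  have hn1pos : (0 : ℝ) < (n : ℝ) - 1 := by linarith
  set c : ℝ := (n : ℝ) / ((n : ℝ) - 1) with hc
  have hcpos : 0 < c := div_pos (by linarith) hn1pos
  set A : ℝ → ℝ := fun s => ∫ z in (0 : ℝ)..s, α z with hA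
  have hAderiv : ∀ s, HasDerivAt A (α s) s := fun s =>
    intervalIntegral.integral_hasDerivAt_right (hαcont.intervalIntegrable 0 s)
      (hαcont.stronglyMeasurableAtFilter _ _) hαcont.continuousAt
  have hAdiff : Differentiable ℝ A := fun s => (hAderiv s).differentiableAt
  have hAcont : Continuous A := hAdiff.continuous
  set E : ℝ → ℝ := fun s => Real.exp (-A s) with hE
  have hEpos : ∀ s, 0 < E s := fun s => Real.exp_pos _
  have hEderiv : ∀ s, HasDerivAt E (-α s * E s) s := fun s => by
    simpa [hE, mul_comm] using ((hAderiv s).neg).exp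
  have hEcont : Continuous E := Real.continuous_exp.comp hAcont.neg
  have hGderiv : ∀ s, HasDerivAt (fun u => ∫ x in (0 : ℝ)..u, E x) (E s) s := fun s =>
    intervalIntegral.integral_hasDerivAt_right (hEcont.intervalIntegrable 0 s)
      (hEcont.stronglyMeasurableAtFilter _ _) hEcont.continuousAt
  have hgfun : g = fun u => c * ∫ x in (0 : ℝ)..u, E x := funext fun u => hg u
  have hgderiv : ∀ s, HasDerivAt g (c * E s) s := fun s => by
    rw [hgfun]; exact (hGderiv s).const_mul c
  have hderivg : deriv g t = c * E t := (hgderiv t).deriv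
  -- the auxiliary function
  set φ : ℝ → ℝ := fun s => E s * (H s)⁻¹ - g s with hφdef
  have hφderiv : ∀ s ∈ Ico (0 : ℝ) T, HasDerivWithinAt φ
      (-α s * E s * (H s)⁻¹ + E s * (-(H' s) / (H s) ^ 2) - c * E s) (Ico 0 T) s := by
    intro s hs
    exact (((hEderiv s).hasDerivWithinAt.mul
      ((hdiff s hs).inv (hHneg s hs).ne)).sub (hgderiv s).hasDerivWithinAt)
  have hmono : MonotoneOn φ (Ico (0 : ℝ) T) := by
    apply monotoneOn_of_hasDerivWithinAt_nonneg (f' := fun s =>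
        -α s * E s * (H s)⁻¹ + E s * (-(H' s) / (H s) ^ 2) - c * E s)
      (convex_Ico 0 T)
      (fun s hs => (hφderiv s hs).continuousWithinAt)
    · intro x hx
      simp only [interior_Ico] at hx ⊢
      exact ((hφderiv x (Ioo_subset_Ico_self hx)).mono Ioo_subset_Ico_self)
    · intro x hx
      rw [interior_Ico] at hx
      have hxm := Ioo_subset_Ico_self hx
      have hHx : H x < 0 := hHneg x hxm
      have hHx2 : (0 : ℝ) < (H x) ^ 2 := by nlinarith
      have hR := hineq x hxm
      have key : -α x * (H x)⁻¹ + (-(H' x) / (H x) ^ 2) - c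
          = -(H' x + α x * H x + c * (H x) ^ 2) / (H x) ^ 2 := by
        field_simp [hHx.ne]
        ring
      have key2 : 0 ≤ -α x * (H x)⁻¹ + (-(H' x) / (H x) ^ 2) - c := by
        rw [key]
        exact div_nonneg (by linarith) hHx2.le
      have : -α x * E x * (H x)⁻¹ + E x * (-(H' x) / (H x) ^ 2) - c * E x
          = E x * (-α x * (H x)⁻¹ + (-(H' x) / (H x) ^ 2) - c) := by ring
      rw [this]
      exact mul_nonneg (hEpos x).le key2
  have hφ0 : φ 0 = H₀⁻¹ := by
    simp [hφdef, hE, hA, hg, hH0]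
  have hkey : H₀⁻¹ + g t ≤ E t * (H t)⁻¹ := by
    have := hmono h0mem htmem ht0
    rw [hφ0] at this
    simp only [hφdef] at this
    linarith
  have hH₀ : H₀ < 0 := hH0 ▸ hHneg 0 h0mem
  have hHt : H t < 0 := hHneg t htmem
  have hEt : 0 < E t := hEpos t
  rw [ge_iff_le, hderivg]
  have hden : ((n : ℝ) - 1) * H₀ * (c * E t) = (n : ℝ) * (H₀ * E t) := by
    rw [hc]; field_simp
  rw [hden]
  have hnne : (n : ℝ) ≠ 0 := by linarith
  rw [mul_div_mul_left _ _ hnne]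
  have heq : (1 + H₀ * g t) / (H₀ * E t) = (H₀⁻¹ + g t) / E t := by
    rw [div_eq_div_iff (mul_neg_of_neg_of_pos hH₀ hEt).ne hEt.ne']
    field_simp [hH₀.ne]
  rw [heq, div_le_iff₀ hEt, one_div]
  calc H₀⁻¹ + g t ≤ E t * (H t)⁻¹ := hkey
    _ = (H t)⁻¹ * E t := by ring
end
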